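/- arXiv:1507.06778 — 4 statements merged into one kernel-verified Lean document; each statement's English description precedes it below -/
import Mathlib

section
/- The ultimate approximation F̄ is the most precise ≤p-monotone exact extension of F: if G : 𝒳 → Three is ≤p-monotone and G(x) = F(x) for all exact x ∈ X, then G(x) ≤p F̄(x) for all x ∈ 𝒳. -/
inductive Three : Type
  | t | u | f
  deriving DecidableEq

namespace Three

/-- Precision order: least partial order with u ≤p t and u ≤p f. -/
def lep (a b : Three) : Prop := a = Three.u ∨ a = b

/-- Truth order: least partial order with f ≤ u ≤ t. -/
def tle (a b : Three) : Prop := a = b ∨ a = Three.f ∨ b = Three.t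

/-- Greatest lower bound w.r.t. the precision order. -/
def IsGlb3 (S : Set Three) (g : Three) : Prop :=
  (∀ x ∈ S, lep g x) ∧ ∀ h : Three, (∀ x ∈ S, lep h x) → lep h g

/-- Least upper bound (maximum) w.r.t. the truth order. -/
def IsLub3 (S : Set Three) (m : Three) : Prop :=
  (∀ v ∈ S, tle v m) ∧ ∀ m' : Three, (∀ v ∈ S, tle v m') → tle m m'

def kNeg : Three → Three
  | t => f
  | f => t
  | u => u

def kAnd : Three → Three → Three
  | f, _ => f
  | _, f => f
  | t, t => t
  | _, _ => u

def kOr : Three → Three → Three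
  | t, _ => t
  | _, t => t
  | f, f => f
  | _, _ => u

end Three

/-- Pointwise precision order on partial sets. -/
def lepF {D : Type} (S S' : D → Three) : Prop := ∀ d : D, Three.lep (S d) (S' d)

theorem ultimate_approximation_most_precise {𝒳 : Type} [PartialOrder 𝒳] (E : Set 𝒳)
    (hE : ∀ x : 𝒳, x ∈ E ↔ ∀ y : 𝒳, x ≤ y → y = x)
    (hcover : ∀ x : 𝒳, ∃ y ∈ E, x ≤ y)
    (F : 𝒳 → Three) (hF : ∀ y ∈ E, F y = Three.t ∨ F y = Three.f)
    (Fbar : 𝒳 → Three)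
    (hFbar : ∀ x : 𝒳, Three.IsGlb3 {v : Three | ∃ y ∈ E, x ≤ y ∧ F y = v} (Fbar x))
    (G : 𝒳 → Three)
    (hGmono : ∀ x y : 𝒳, x ≤ y → Three.lep (G x) (G y))
    (hGext : ∀ x ∈ E, G x = F x) :
    ∀ x : 𝒳, Three.lep (G x) (Fbar x) := by
  intro x
  exact (hFbar x).2 (G x) (fun v hv => by
    obtain ⟨y, hyE, hxy, hFy⟩ := hv
    have := hGmono x y hxy
    rw [hGext y hyE, hFy] at this
    exact this)
end

section
/- The ultimate approximation of universal quantification over a domain D applied to a partial set S : D → Three equals the minimum (with respect to the truth order ≤) of the values S(d) over d ∈ D; in particular it equals t if all S(d)=t, f if some S(d)=f, and u otherwise. -/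
/-- Two-valued universal quantification over D, applied to exact sets. -/
def forallD {D : Type} [Fintype D] (S' : D → Three) : Three :=
  if ∀ d : D, S' d = Three.t then Three.t else Three.f

/-- The set over which the glb defining the ultimate approximation of ∀ is taken. -/
def uaForallSet {D : Type} [Fintype D] (S : D → Three) : Set Three :=
  {v : Three | ∃ S' : D → Three, (∀ d : D, S' d = Three.t ∨ S' d = Three.f) ∧
     lepF S S' ∧ forallD S' = v}

section Aux
variable {D : Type} [Fintype D] [Nonempty D] (S : D → Three)

lemma aux_allt (h : ∀ d : D, S d = Three.t) : Three.IsGlb3 (uaForallSet S) Three.t := by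
  constructor
  · rintro x ⟨S', _, hle, rfl⟩
    have hall : ∀ d, S' d = Three.t := by
      intro d
      rcases hle d with h1 | h1
      · rw [h d] at h1; cases h1
      · rw [← h1, h d]
    simp [forallD, hall, Three.lep]
  · intro g hg
    apply hg
    exact ⟨S, fun d => Or.inl (h d), fun d => Or.inr rfl, by simp [forallD, h]⟩

lemma aux_somef (h : ∃ d : D, S d = Three.f) : Three.IsGlb3 (uaForallSet S) Three.f := by
  obtain ⟨d0, hd0⟩ := h
  constructor
  · rintro x ⟨S', _, hle, rfl⟩
    have hf0 : S' d0 = Three.f := by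
      rcases hle d0 with h1 | h1
      · rw [hd0] at h1; cases h1
      · rw [← h1, hd0]
    have hne : ¬ ∀ d, S' d = Three.t := fun hh => by rw [hh d0] at hf0; cases hf0
    simp [forallD, hne, Three.lep]
  · intro g hg
    apply hg
    refine ⟨fun d => if S d = Three.u then Three.t else S d, ?_, ?_, ?_⟩
    · intro d
      by_cases hu : S d = Three.u
      · simp [hu]
      · simp only [hu, if_false]
        cases hv : S d
        · exact Or.inl rfl
        · exact absurd hv hu
        · exact Or.inr rfl
    · intro d
      by_cases hu : S d = Three.u
      · exact Or.inl hu
      · simp only [hu, if_false]; exact Or.inr rfl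
    · have hne : ¬ ∀ d, (if S d = Three.u then Three.t else S d) = Three.t := by
        intro hh
        have := hh d0
        rw [hd0] at this
        simp at this
      simp only [forallD, if_neg hne]

lemma aux_mid (h1 : ¬ ∀ d : D, S d = Three.t) (h2 : ¬ ∃ d : D, S d = Three.f) :
    Three.IsGlb3 (uaForallSet S) Three.u := by
  haveI := Classical.decEq D
  push_neg at h1 h2
  obtain ⟨d0, hd0⟩ := h1
  have hd0u : S d0 = Three.u := by
    cases hv : S d0 <;> first | rfl | (exfalso; exact hd0 hv) | (exfalso; exact h2 d0 hv)
  have ht : Three.t ∈ uaForallSet S := by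
    refine ⟨fun _ => Three.t, fun d => Or.inl rfl, ?_, by simp [forallD]⟩
    intro d
    cases hv : S d
    · exact Or.inr rfl
    · exact Or.inl rfl
    · exact absurd hv (h2 d)
  have hf : Three.f ∈ uaForallSet S := by
    refine ⟨fun d => if d = d0 then Three.f else Three.t, ?_, ?_, ?_⟩
    · intro d; by_cases hd : d = d0 <;> simp [hd]
    · intro d
      by_cases hd : d = d0
      · subst hd; simp [hd0u, Three.lep]
      · simp [hd]
        cases hv : S d
        · exact Or.inr rfl
        · exact Or.inl rfl
        · exact absurd hv (h2 d)
    · have : ¬ ∀ d, (if d = d0 then Three.f else Three.t) = Three.t := by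
        intro hh; have := hh d0; simp at this
      simp [forallD, this]
  constructor
  · intro x _; exact Or.inl rfl
  · intro g hg
    have g1 := hg _ ht
    have g2 := hg _ hf
    rcases g1 with g1 | g1
    · exact Or.inl g1
    · rcases g2 with g2 | g2
      · exact Or.inl g2
      · rw [g1] at g2; cases g2

end Aux

theorem ultimate_approx_forall {D : Type} [Fintype D] [Nonempty D] (S : D → Three) :
    (∀ m : Three, ((∃ d : D, S d = m) ∧ ∀ d : D, Three.tle m (S d)) →
        Three.IsGlb3 (uaForallSet S) m) ∧
    ((∀ d : D, S d = Three.t) → Three.IsGlb3 (uaForallSet S) Three.t) ∧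
    ((∃ d : D, S d = Three.f) → Three.IsGlb3 (uaForallSet S) Three.f) ∧
    ((¬ ∀ d : D, S d = Three.t) → (¬ ∃ d : D, S d = Three.f) →
        Three.IsGlb3 (uaForallSet S) Three.u) := by
  refine ⟨?_, aux_allt S, aux_somef S, aux_mid S⟩
  rintro m ⟨⟨d0, hd0⟩, hmin⟩
  cases m
  · apply aux_allt
    intro d
    rcases hmin d with h | h | h
    · exact h.symm
    · cases h
    · exact h
  · apply aux_mid
    · intro hh; rw [hh d0] at hd0; cases hd0
    · rintro ⟨d, hd⟩
      rcases hmin d with h | h | h <;> simp_all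
  · exact aux_somef S ⟨d0, hd0⟩
end

section
/- The ultimate approximation of existential quantification over a finite nonempty domain D applied to a partial set S : D → Three equals the maximum with respect to the truth order ≤ of the values S(d), d ∈ D. -/
/-- Two-valued existential quantification over D, applied to exact sets. -/
def existsD {D : Type} [Fintype D] (S' : D → Three) : Three :=
  if ∃ d : D, S' d = Three.t then Three.t else Three.f

/-- The set over which the glb defining the ultimate approximation of ∃ is taken. -/
def uaExistsSet {D : Type} [Fintype D] (S : D → Three) : Set Three :=
  {v : Three | ∃ S' : D → Three, (∀ d : D, S' d = Three.t ∨ S' d = Three.f) ∧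
     lepF S S' ∧ existsD S' = v}

/-- Canonical exact completion: u ↦ f. -/
def cano : Three → Three := fun x => if x = Three.t then Three.t else Three.f

lemma cano_exact (x : Three) : cano x = Three.t ∨ cano x = Three.f := by
  cases x <;> simp [cano]

lemma cano_lep (x : Three) : Three.lep x (cano x) := by
  cases x <;> simp [cano, Three.lep]

lemma cano_t_iff (x : Three) : cano x = Three.t ↔ x = Three.t := by
  cases x <;> simp [cano]

theorem ultimate_approx_exists {D : Type} [Fintype D] [Nonempty D] (S : D → Three) :
    ∀ m : Three, ((∃ d : D, S d = m) ∧ ∀ d : D, Three.tle (S d) m) →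
      Three.IsGlb3 (uaExistsSet S) m := by
  classical
  rintro m ⟨⟨d0, hd0⟩, hmax⟩
  constructor
  · rintro x ⟨S', hex, hle, hval⟩
    cases m with
    | t =>
      have hS'd0 : S' d0 = Three.t := by
        have h := hle d0; rw [hd0] at h
        rcases h with h | h
        · exact absurd h (by decide)
        · exact h.symm
      have : existsD S' = Three.t := by
        simp only [existsD, if_pos (show ∃ d : D, S' d = Three.t from ⟨d0, hS'd0⟩)]
      rw [this] at hval
      exact Or.inr hval
    | u => exact Or.inl rfl
    | f =>
      have hall : ∀ d, S' d = Three.f := by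
        intro d
        have hf : S d = Three.f := by
          have := hmax d
          rcases this with h | h | h
          · exact h
          · exact h
          · exact absurd h (by decide)
        have h := hle d; rw [hf] at h
        rcases h with h | h
        · exact absurd h (by decide)
        · exact h.symm
      have hne : ¬ ∃ d : D, S' d = Three.t := by
        rintro ⟨d, hd⟩; rw [hall d] at hd; exact absurd hd (by decide)
      have : existsD S' = Three.f := by
        simp only [existsD, if_neg hne]
      rw [this] at hval
      exact Or.inr hval
  · intro h hh
    cases m with
    | t =>
      have ht : Three.t ∈ uaExistsSet S := by
        refine ⟨fun d => cano (S d), fun d => cano_exact _, fun d => cano_lep _, ?_⟩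
        have hc : cano (S d0) = Three.t := (cano_t_iff _).mpr hd0
        simp only [existsD, if_pos (show ∃ d : D, cano (S d) = Three.t from ⟨d0, hc⟩)]
      exact hh _ ht
    | f =>
      have hf : Three.f ∈ uaExistsSet S := by
        refine ⟨fun d => cano (S d), fun d => cano_exact _, fun d => cano_lep _, ?_⟩
        have hne : ¬ ∃ d : D, cano (S d) = Three.t := by
          rintro ⟨d, hd⟩
          rw [cano_t_iff] at hd
          have := hmax d; rw [hd] at this
          rcases this with h | h | h <;> exact absurd h (by decide)
        simp only [existsD, if_neg hne]
      exact hh _ hf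
    | u =>
      -- t ∈ set via completion sending d0 ↦ t
      have hSd0 : S d0 = Three.u := hd0
      have ht : Three.t ∈ uaExistsSet S := by
        refine ⟨fun d => if d = d0 then Three.t else cano (S d), ?_, ?_, ?_⟩
        · intro d; by_cases hd : d = d0 <;> simp [hd, cano_exact]
        · intro d; by_cases hd : d = d0
          · subst hd; rw [hSd0]; simp; exact Or.inl rfl
          · simp [hd, cano_lep]
        · have hc : (if d0 = d0 then Three.t else cano (S d0)) = Three.t := by simp
          simp only [existsD,
            if_pos (show ∃ d : D, (if d = d0 then Three.t else cano (S d)) = Three.t from ⟨d0, hc⟩)]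
      have hf : Three.f ∈ uaExistsSet S := by
        refine ⟨fun d => cano (S d), fun d => cano_exact _, fun d => cano_lep _, ?_⟩
        have hne : ¬ ∃ d : D, cano (S d) = Three.t := by
          rintro ⟨d, hd⟩
          rw [cano_t_iff] at hd
          have := hmax d; rw [hd] at this
          rcases this with h | h | h <;> exact absurd h (by decide)
        simp only [existsD, if_neg hne]
      have h1 := hh _ ht
      have h2 := hh _ hf
      cases h with
      | u => exact Or.inl rfl
      | t =>
        rcases h2 with h2 | h2 <;> exact absurd h2 (by decide)
      | f =>
        rcases h1 with h1 | h1 <;> exact absurd h1 (by decide)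
end

section
/- For an exact interpretation 𝓘 (with only the empty set of unknown atoms), 𝓘 is a partial stable interpretation of a rule set Δ if and only if (1) for each defined domain atom P(d̄), its value in 𝓘 equals the maximum over rule bodies defining P of their values in 𝓘, and (2) there is no non-empty set T of atoms true in 𝓘 such that 𝓘[T:u] is closed under Δ. -/
/-- A rule set: for each (defined domain) atom, the set of bodies of rules with that head. -/
structure RuleSet (A B : Type) where
  body : A → Set B

open Classical in
/-- Revise an interpretation, setting all atoms in S to value v. -/
noncomputable def revise {A : Type} (I : A → Three) (S : Set A) (v : Three) : A → Three :=
  fun a => if a ∈ S then v else I a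

/-- I is closed under Δ: true body instances have true heads. -/
def closedUnder {A B : Type} (val : B → (A → Three) → Three) (Δ : RuleSet A B)
    (I : A → Three) : Prop :=
  ∀ a : A, ∀ b ∈ Δ.body a, val b I = Three.t → I a = Three.t

/-- U is an unfounded set of Δ in I. -/
def unfoundedSet {A B : Type} (val : B → (A → Three) → Three) (Δ : RuleSet A B)
    (I : A → Three) (U : Set A) : Prop :=
  (∀ a ∈ U, I a = Three.u) ∧
  ∀ a ∈ U, ∀ b ∈ Δ.body a, val b (revise I U Three.f) = Three.f

/-- Partial stable interpretation of Δ: fixpoint, prudence and braveness. -/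
def partialStable {A B : Type} (val : B → (A → Three) → Three) (Δ : RuleSet A B)
    (I : A → Three) : Prop :=
  (∀ a : A, Three.IsLub3 {v : Three | ∃ b ∈ Δ.body a, val b I = v} (I a)) ∧
  (¬ ∃ T U : Set A, T.Nonempty ∧ (∀ a ∈ T, I a = Three.t) ∧ (∀ a ∈ U, I a = Three.u) ∧
      closedUnder val Δ (revise (revise I T Three.u) U Three.t)) ∧
  (∀ U : Set A, unfoundedSet val Δ I U → U = ∅)

theorem exact_partial_stable_characterization
    {A B : Type} (val : B → (A → Three) → Three) (Δ : RuleSet A B)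
    (I : A → Three) (hexact : ∀ a : A, I a ≠ Three.u) :
    partialStable val Δ I ↔
      ((∀ a : A, Three.IsLub3 {v : Three | ∃ b ∈ Δ.body a, val b I = v} (I a)) ∧
       ¬ ∃ T : Set A, T.Nonempty ∧ (∀ a ∈ T, I a = Three.t) ∧
          closedUnder val Δ (revise I T Three.u)) := by

  have hrev0 : ∀ J : A → Three, revise J (∅ : Set A) Three.t = J := by
    intro J; funext a; simp [revise]
  constructor
  · rintro ⟨h1, h2, h3⟩
    refine ⟨h1, ?_⟩
    rintro ⟨T, hT, hTt, hcl⟩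
    exact h2 ⟨T, ∅, hT, hTt, by simp, by rw [hrev0]; exact hcl⟩
  · rintro ⟨h1, h2⟩
    refine ⟨h1, ?_, ?_⟩
    · rintro ⟨T, U, hT, hTt, hUu, hcl⟩
      have hU : U = ∅ := by
        ext a; simp only [Set.mem_empty_iff_false, iff_false]
        intro ha; exact hexact a (hUu a ha)
      rw [hU, hrev0] at hcl
      exact h2 ⟨T, hT, hTt, hcl⟩
    · intro U hU
      ext a; simp only [Set.mem_empty_iff_false, iff_false]
      intro ha; exact hexact a (hU.1 a ha)
end
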